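/- arXiv:1412.0073 — 9 statements merged into one kernel-verified Lean document; each statement's English description precedes it below -/
import Mathlib

section
/- For a graph G with vertex u of degree d and neighbors v_1, …, v_d, letting G_i = (G − u) − {v_1, …, v_{i−1}}, the ratio R(G, u) = Z(G − N_G[u])/Z(G − u) satisfies R(G, u) = ∏_{i=1}^{d} Z(G_i − v_i)/Z(G_i) = ∏_{i=1}^{d} (1 + R(G_i, v_i))^{−1}. -/
open Finset

/-- The number of independent sets of `G` contained in the allowed vertex set `A`
(this equals `Z` of the induced subgraph of `G` on `A`). -/
def numIndep {W : Type*} [DecidableEq W] (G : SimpleGraph W) [DecidableRel G.Adj]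
    (A : Finset W) : ℕ :=
  (A.powerset.filter (fun s => ∀ a ∈ s, ∀ b ∈ s, ¬ G.Adj a b)).card

/-- The ratio `R(H, u) = Z(H − N_H[u]) / Z(H − u)` where `H` is the induced
subgraph of `G` on the allowed set `A`. -/
noncomputable def ratioR {W : Type*} [Fintype W] [DecidableEq W] (G : SimpleGraph W)
    [DecidableRel G.Adj] (A : Finset W) (u : W) : ℝ :=
  (numIndep G (A \ insert u (G.neighborFinset u)) : ℝ) / (numIndep G (A.erase u) : ℝ)

/-!
Removing the neighbours `v₁, …, v_d` of `u` one at a time from `G − u` turns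
`Z(G − u)` into `Z(G − N[u])`, so `R(G, u)` telescopes into the product of the ratios
`Z(Gᵢ − vᵢ)/Z(Gᵢ)`. Each factor equals `(1 + R(Gᵢ, vᵢ))⁻¹` by the self-reducibility
`Z(Gᵢ) = Z(Gᵢ − vᵢ) + Z(Gᵢ − N[vᵢ])`.
-/

theorem List.Nodup.get_notMem_take {α : Type*} {l : List α} (hl : l.Nodup)
    (i : Fin l.length) : l.get i ∉ l.take i := by
  classical
  rw [List.mem_take_iff_idxOf_lt (l.get_mem i), List.get_eq_getElem, hl.idxOf_getElem]
  exact lt_irrefl _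

namespace SimpleGraph

variable {W : Type*} [DecidableEq W] (G : SimpleGraph W) [DecidableRel G.Adj]

theorem numIndep_pos (A : Finset W) : 0 < numIndep G A :=
  card_pos.2 ⟨∅, by simp⟩

theorem numIndep_sdiff_toFinset_div (A : Finset W) (l : List W) :
    (numIndep G (A \ l.toFinset) : ℝ) / numIndep G A =
      ∏ i : Fin l.length,
        (numIndep G ((A \ (l.take i).toFinset).erase (l.get i)) : ℝ) /
          numIndep G (A \ (l.take i).toFinset) := by
  induction l generalizing A with
  | nil => simp [(numIndep_pos G A).ne']
  | cons v l ih =>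
    have hA (s : Finset W) : A \ insert v s = A.erase v \ s := by
      rw [sdiff_insert, erase_sdiff_comm]
    erw [Fin.prod_univ_succ]
    simp only [List.get_eq_getElem, Fin.val_zero, List.take_zero, List.toFinset_nil,
      sdiff_empty, List.getElem_cons_zero, Fin.val_succ, List.take_succ_cons,
      List.getElem_cons_succ, List.toFinset_cons, hA]
    simp only [← List.get_eq_getElem, ← ih]
    rw [div_mul_div_cancel₀' (Nat.cast_ne_zero.2 (numIndep_pos G _).ne')]

variable [Fintype W]

theorem numIndep_eq_numIndep_erase_add {A : Finset W} {v : W} (hv : v ∈ A) :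
    numIndep G A = numIndep G (A.erase v) + numIndep G (A \ insert v (G.neighborFinset v)) := by
  unfold numIndep
  rw [← card_filter_add_card_filter_not (p := (v ∉ ·)), filter_filter, filter_filter]
  congr 1
  · congr 1
    ext s
    simp only [mem_filter, mem_powerset, subset_erase]
    tauto
  · -- independent sets through `v` are `insert v t` with `t` independent and avoiding `N[v]`
    refine card_nbij' (·.erase v) (insert v) ?_ ?_ ?_ ?_ <;> intro s hs <;>
      simp only [Decidable.not_not, coe_filter, mem_powerset, Set.mem_ofPred_eq, mem_erase,
        ne_eq, and_imp] at hs ⊢ <;>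
      grind [G.adj_symm, G.irrefl, mem_neighborFinset]

theorem numIndep_erase_div_eq_inv_one_add_ratioR {A : Finset W} {v : W} (hv : v ∈ A) :
    (numIndep G (A.erase v) : ℝ) / numIndep G A = (1 + ratioR G A v)⁻¹ := by
  rw [ratioR, numIndep_eq_numIndep_erase_add G hv, Nat.cast_add,
    one_add_div (Nat.cast_ne_zero.2 (numIndep_pos G _).ne'), inv_div]

end SimpleGraph

/-- with `v_1, …, v_d` enumerating the neighbors of `u` and
`G_i = (G − u) − {v_1, …, v_{i−1}}`, we have
`R(G, u) = ∏_i Z(G_i − v_i)/Z(G_i) = ∏_i (1 + R(G_i, v_i))⁻¹`. -/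
theorem ratioR_eq_prod {W : Type*} [Fintype W] [DecidableEq W]
    (G : SimpleGraph W) [DecidableRel G.Adj] (u : W)
    (l : List W) (hnd : l.Nodup) (hl : l.toFinset = G.neighborFinset u) :
    ratioR G Finset.univ u =
      (∏ i : Fin l.length,
        (numIndep G (((Finset.univ.erase u) \ (l.take i).toFinset).erase (l.get i)) : ℝ) /
          (numIndep G ((Finset.univ.erase u) \ (l.take i).toFinset) : ℝ)) ∧
    ratioR G Finset.univ u =
      ∏ i : Fin l.length,
        (1 + ratioR G ((Finset.univ.erase u) \ (l.take i).toFinset) (l.get i))⁻¹ := by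
  have hR : ratioR G univ u =
      (numIndep G ((univ.erase u) \ l.toFinset) : ℝ) / numIndep G (univ.erase u) := by
    rw [ratioR, hl, sdiff_insert, ← erase_sdiff_comm]
  have hprod := hR.trans (G.numIndep_sdiff_toFinset_div _ l)
  refine ⟨hprod, hprod.trans (prod_congr rfl fun i _ => ?_)⟩
  have hne : l.get i ≠ u := by
    have hadj : l.get i ∈ G.neighborFinset u := hl ▸ List.mem_toFinset.2 (l.get_mem i)
    exact (G.ne_of_adj ((G.mem_neighborFinset u _).1 hadj)).symm
  refine G.numIndep_erase_div_eq_inv_one_add_ratioR (mem_sdiff.2 ⟨?_, ?_⟩)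
  · exact mem_erase.2 ⟨hne, mem_univ _⟩
  · exact List.mem_toFinset.not.2 (hnd.get_notMem_take i)
end

section
/- For any graph G and vertex u of degree d, the ratio R(G, u) = Z(G − N[u])/Z(G − u) satisfies 2^{−d} ≤ R(G, u) ≤ 1. -/
open Finset

section numIndep

variable {W : Type*} [DecidableEq W] (G : SimpleGraph W) [DecidableRel G.Adj]

theorem numIndep_pos (A : Finset W) : 0 < numIndep G A :=
  card_pos.2 ⟨∅, by simp⟩

theorem numIndep_mono {A B : Finset W} (h : A ⊆ B) : numIndep G A ≤ numIndep G B := by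
  apply card_le_card
  intro s hs
  simp only [mem_filter, mem_powerset] at hs ⊢
  exact ⟨hs.1.trans h, hs.2⟩

theorem numIndep_le_two_pow_card_mul_numIndep_sdiff (A N : Finset W) :
    numIndep G A ≤ 2 ^ #N * numIndep G (A \ N) := by
  unfold numIndep
  rw [← card_powerset, ← card_product]
  apply card_le_card_of_injOn (fun s => (s ∩ N, s \ N))
  · intro s hs
    simp only [coe_filter, mem_powerset, Set.mem_ofPred_eq, coe_product, Set.mem_prod,
      mem_coe] at hs ⊢
    exact ⟨inter_subset_right, sdiff_subset_sdiff hs.1 le_rfl,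
      fun a ha b hb => hs.2 a (sdiff_subset ha) b (sdiff_subset hb)⟩
  · intro s _ t _ hst
    simp only [Prod.mk.injEq] at hst
    rw [← sdiff_union_inter s N, ← sdiff_union_inter t N, hst.1, hst.2]

end numIndep

section ratioR

variable {W : Type*} [Fintype W] [DecidableEq W] (G : SimpleGraph W) [DecidableRel G.Adj]

theorem ratioR_le_one (A : Finset W) (u : W) : ratioR G A u ≤ 1 := by
  rw [ratioR, div_le_one (mod_cast numIndep_pos G _)]
  refine mod_cast numIndep_mono G ?_
  rw [← sdiff_singleton_eq_erase]
  exact sdiff_subset_sdiff le_rfl (singleton_subset_iff.2 (mem_insert_self u _))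

theorem two_zpow_neg_degree_le_ratioR (A : Finset W) (u : W) :
    (2 : ℝ) ^ (-(G.degree u : ℤ)) ≤ ratioR G A u := by
  have hsplit : numIndep G (A.erase u) ≤
      2 ^ G.degree u * numIndep G (A \ insert u (G.neighborFinset u)) := by
    rw [sdiff_insert, ← erase_sdiff_comm]
    exact numIndep_le_two_pow_card_mul_numIndep_sdiff G _ _
  rw [ratioR, zpow_neg, zpow_natCast, ← one_div,
    div_le_div_iff₀ (by positivity) (mod_cast numIndep_pos G _), one_mul, mul_comm]
  exact_mod_cast hsplit

end ratioR

/-- `2^{−d} ≤ R(G, u) ≤ 1` where `d = deg_G(u)`. -/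
theorem ratioR_bounds {W : Type*} [Fintype W] [DecidableEq W]
    (G : SimpleGraph W) [DecidableRel G.Adj] (u : W) :
    (2 : ℝ) ^ (-(G.degree u : ℤ)) ≤ ratioR G Finset.univ u ∧
      ratioR G Finset.univ u ≤ 1 :=
  ⟨two_zpow_neg_degree_le_ratioR G univ u, ratioR_le_one G univ u⟩
end

section
/- The function f(x) = (1 − e^x)·(x − ln(1 − e^x)) is concave on the interval [−ln 2, 0). -/
/-!
Write `f(x) = (1 - eˣ) g(x)` with `g(x) = x - log (1 - eˣ)`, so that `g' = (1 - eˣ)⁻¹`. Then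
`f' = 1 - eˣ g` and `f'' = -eˣ (g + (1 - eˣ)⁻¹)`. For `x ≥ -log 2` we have `1 - eˣ ≤ 1/2 ≤ eˣ`,
hence `g(x) = log (eˣ / (1 - eˣ)) ≥ 0`, and `f'' ≤ 0`.
-/

open Real Set

noncomputable def logitExp (x : ℝ) : ℝ := x - log (1 - exp x)

section

variable {x : ℝ}

lemma one_sub_exp_pos (hx : x < 0) : 0 < 1 - exp x := sub_pos.2 (exp_lt_one_iff.2 hx)

lemma hasDerivAt_logitExp (hx : x < 0) : HasDerivAt logitExp (1 - exp x)⁻¹ x := by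
  have hne := (one_sub_exp_pos hx).ne'
  refine ((hasDerivAt_id x).sub (((hasDerivAt_exp x).const_sub 1).log hne)).congr_deriv ?_
  field_simp
  ring

lemma hasDerivAt_one_sub_exp_mul_logitExp (hx : x < 0) :
    HasDerivAt (fun y => (1 - exp y) * logitExp y) (1 - exp x * logitExp x) x := by
  refine (((hasDerivAt_exp x).const_sub 1).mul (hasDerivAt_logitExp hx)).congr_deriv ?_
  rw [mul_inv_cancel₀ (one_sub_exp_pos hx).ne']
  ring

lemma hasDerivAt_const_sub_exp_mul_logitExp (hx : x < 0) :
    HasDerivAt (fun y => 1 - exp y * logitExp y) (-(exp x * (logitExp x + (1 - exp x)⁻¹))) x := by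
  refine (((hasDerivAt_exp x).mul (hasDerivAt_logitExp hx)).const_sub 1).congr_deriv ?_
  ring

lemma logitExp_nonneg (hx : x ∈ Ico (-log 2) 0) : 0 ≤ logitExp x := by
  have hhalf : 1 / 2 ≤ exp x := by
    simpa [exp_neg, exp_log] using exp_le_exp.2 hx.1
  have hle : log (1 - exp x) ≤ x := by
    simpa using log_le_log (one_sub_exp_pos hx.2) (by linarith : 1 - exp x ≤ exp x)
  unfold logitExp
  linarith

end

/-- `f(x) = (1 − e^x)(x − ln(1 − e^x))` is concave on `[−ln 2, 0)`. -/
theorem concave_potential_aux :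
    ConcaveOn ℝ (Set.Ico (-Real.log 2) 0)
      (fun x : ℝ => (1 - Real.exp x) * (x - Real.log (1 - Real.exp x))) := by
  have hD : ∀ x ∈ interior (Ico (-log 2) (0 : ℝ)), x ∈ Ico (-log 2) 0 :=
    fun x hx => interior_subset hx
  refine concaveOn_of_hasDerivWithinAt2_nonpos (convex_Ico _ _)
    (fun x hx => (hasDerivAt_one_sub_exp_mul_logitExp hx.2).continuousAt.continuousWithinAt)
    (fun x hx => (hasDerivAt_one_sub_exp_mul_logitExp (hD x hx).2).hasDerivWithinAt)
    (fun x hx => (hasDerivAt_const_sub_exp_mul_logitExp (hD x hx).2).hasDerivWithinAt)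
    (fun x hx => ?_)
  have := one_sub_exp_pos (hD x hx).2
  have := logitExp_nonneg (hD x hx)
  have : 0 < exp x * (logitExp x + (1 - exp x)⁻¹) := by positivity
  linarith
end

section
/- For real numbers s_1, …, s_k in [1/2, 1) with geometric mean ŝ = (∏ s_i)^{1/k}, we have ∑_{i=1}^k (1 − s_i)·ln(s_i/(1 − s_i)) ≤ k·(1 − ŝ)·ln(ŝ/(1 − ŝ)). -/
open Real Finset

/-!
Substituting `s = eˣ` turns the summand into `f x = (1 - eˣ) (x - log (1 - eˣ))`, whose second
derivative `-eˣ (x - log (1 - eˣ) + 1 / (1 - eˣ))` is nonpositive as long as `eˣ ≥ 1 / 2`, since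
then `x ≥ log (1 - eˣ)`. Jensen's inequality for the concave `f` at the points `log sᵢ` with equal
weights is the claim, because the mean of the `log sᵢ` is the logarithm of the geometric mean.
-/

theorem ConcaveOn.sum_le_card_mul_apply_geomMean {ι : Type*} [Fintype ι] {D : Set ℝ} {f : ℝ → ℝ}
    (hf : ConcaveOn ℝ D (f ∘ exp)) {s : ι → ℝ} (hs : ∀ i, 0 < s i) (hsD : ∀ i, log (s i) ∈ D) :
    ∑ i, f (s i) ≤ Fintype.card ι * f ((∏ i, s i) ^ (1 / Fintype.card ι : ℝ)) := by
  cases isEmpty_or_nonempty ι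
  · simp
  set n : ℝ := (Fintype.card ι : ℝ)
  have hn : 0 < n := by positivity
  have hmean : ∑ i, n⁻¹ * log (s i) = log (∏ i, s i) * (1 / n) := by
    rw [log_prod fun i _ => (hs i).ne', ← mul_sum]
    ring
  have hjensen := hf.le_map_sum (t := univ) (w := fun _ => n⁻¹) (p := fun i => log (s i))
    (fun _ _ => by positivity) (by simp [n]) (fun i _ => hsD i)
  simp only [Function.comp_apply, exp_log (hs _), smul_eq_mul] at hjensen
  rw [hmean, ← mul_sum] at hjensen
  rw [rpow_def_of_pos (prod_pos fun i _ => hs i)]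
  calc ∑ i, f (s i) = n * (n⁻¹ * ∑ i, f (s i)) := by field_simp
    _ ≤ n * f (exp (log (∏ i, s i) * (1 / n))) := by gcongr

theorem one_sub_exp_ne_zero {x : ℝ} (hx : x ≠ 0) : 1 - exp x ≠ 0 := by
  rwa [sub_ne_zero, ne_comm, Ne, exp_eq_one_iff]

theorem hasDerivAt_sub_log_one_sub_exp {x : ℝ} (hx : x ≠ 0) :
    HasDerivAt (fun x => x - log (1 - exp x)) (1 - exp x)⁻¹ x := by
  have hne := one_sub_exp_ne_zero hx
  refine ((hasDerivAt_id x).sub (((hasDerivAt_exp x).const_sub 1).log hne)).congr_deriv ?_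
  field_simp
  ring

noncomputable def weightedLogOddsExp (x : ℝ) : ℝ := (1 - exp x) * (x - log (1 - exp x))

theorem hasDerivAt_weightedLogOddsExp {x : ℝ} (hx : x ≠ 0) :
    HasDerivAt weightedLogOddsExp (1 - exp x * (x - log (1 - exp x))) x := by
  have hne := one_sub_exp_ne_zero hx
  refine (((hasDerivAt_exp x).const_sub 1).mul
    (hasDerivAt_sub_log_one_sub_exp hx)).congr_deriv ?_
  field_simp
  ring

theorem hasDerivAt_deriv_weightedLogOddsExp {x : ℝ} (hx : x ≠ 0) :
    HasDerivAt (fun x => 1 - exp x * (x - log (1 - exp x)))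
      (-(exp x * (x - log (1 - exp x) + (1 - exp x)⁻¹))) x := by
  refine (((hasDerivAt_exp x).mul (hasDerivAt_sub_log_one_sub_exp hx)).const_sub 1).congr_deriv ?_
  ring

theorem concaveOn_weightedLogOddsExp : ConcaveOn ℝ (Set.Ico (-log 2) 0) weightedLogOddsExp := by
  refine concaveOn_of_hasDerivWithinAt2_nonpos (convex_Ico _ _)
    (f' := fun x => 1 - exp x * (x - log (1 - exp x)))
    (f'' := fun x => -(exp x * (x - log (1 - exp x) + (1 - exp x)⁻¹)))
    (fun x hx => (hasDerivAt_weightedLogOddsExp hx.2.ne).continuousAt.continuousWithinAt)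
    (fun x hx => ?_) (fun x hx => ?_) (fun x hx => ?_) <;> rw [interior_Ico] at hx
  · exact (hasDerivAt_weightedLogOddsExp hx.2.ne).hasDerivWithinAt
  · exact (hasDerivAt_deriv_weightedLogOddsExp hx.2.ne).hasDerivWithinAt
  obtain ⟨hlow, hneg⟩ := hx
  have hexp_lt : exp x < 1 := exp_lt_one_iff.mpr hneg
  have hhalf : 1 / 2 ≤ exp x := by
    simpa [exp_neg, exp_log] using exp_le_exp.mpr hlow.le
  have hlog_le : log (1 - exp x) ≤ x :=
    calc log (1 - exp x) ≤ log (1 / 2) := log_le_log (by linarith) (by linarith)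
      _ = -log 2 := by rw [one_div, log_inv]
      _ ≤ x := hlow.le
  have hinv : 0 < (1 - exp x)⁻¹ := inv_pos.mpr (by linarith)
  exact neg_nonpos.mpr (mul_nonneg (exp_pos x).le (by linarith))

theorem concaveOn_one_sub_mul_log_div_one_sub_comp_exp :
    ConcaveOn ℝ (Set.Ico (-log 2) 0) ((fun s => (1 - s) * log (s / (1 - s))) ∘ exp) := by
  refine concaveOn_weightedLogOddsExp.congr fun x hx => ?_
  simp only [weightedLogOddsExp, Function.comp_apply,
    log_div (exp_ne_zero x) (one_sub_exp_ne_zero hx.2.ne), log_exp]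

theorem jensen_geometric_mean_general (k : ℕ) (s : Fin k → ℝ)
    (hs1 : ∀ i, 1 / 2 ≤ s i) (hs2 : ∀ i, s i < 1) :
    ∑ i, (1 - s i) * Real.log (s i / (1 - s i)) ≤
      (k : ℝ) * (1 - (∏ i, s i) ^ ((1 : ℝ) / k)) *
        Real.log ((∏ i, s i) ^ ((1 : ℝ) / k) / (1 - (∏ i, s i) ^ ((1 : ℝ) / k))) := by
  have hpos : ∀ i, 0 < s i := fun i => by linarith [hs1 i]
  have hlog_mem : ∀ i, log (s i) ∈ Set.Ico (-log 2) 0 := fun i =>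
    ⟨by simpa [one_div, log_inv] using log_le_log (by norm_num) (hs1 i), log_neg (hpos i) (hs2 i)⟩
  simpa [mul_assoc] using
    concaveOn_one_sub_mul_log_div_one_sub_comp_exp.sum_le_card_mul_apply_geomMean hpos hlog_mem

/-- Jensen-type inequality for `(1 − s)·ln(s/(1 − s))` with the
geometric mean `ŝ = (∏ s_i)^{1/k}`. -/
theorem jensen_geometric_mean (k : ℕ) (hk : 1 ≤ k) (s : Fin k → ℝ)
    (hs1 : ∀ i, 1 / 2 ≤ s i) (hs2 : ∀ i, s i < 1) :
    ∑ i, (1 - s i) * Real.log (s i / (1 - s i)) ≤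
      (k : ℝ) * (1 - (∏ i, s i) ^ ((1 : ℝ) / k)) *
        Real.log ((∏ i, s i) ^ ((1 : ℝ) / k) / (1 - (∏ i, s i) ^ ((1 : ℝ) / k))) :=
  jensen_geometric_mean_general k s hs1 hs2
end

section
/- For α = 0.9616 and every integer w ≥ 45, and every s with 1/(1 + (16/17)^w) ≤ s < 1, we have α^{−⌈log_{45}(w+1)⌉}·(1 − s)·ln(s/(1 − s)) ≤ 1/5. -/
/-!
With `u = s/(1 - s)` one has `(1 - s) log (s/(1 - s)) = log u / (1 + u)`, which decreases for
`u ≥ 4` because `1 + 1/u < log u` there; so the worst `s` is `1/(1 + q)`, `q = (16/17)^w`, giving at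
most `q log q⁻¹ = w (16/17)^w log (17/16)`. Dropping the ceiling costs one factor `α⁻¹`, and
`α^{-log₄₅(w+1)} = (w+1)^c` with `c = log₄₅ α⁻¹ < 1/10`. The product `(w+1)^c w (16/17)^w` decreases
for `w ≥ 45`, and its value at `w = 45` gives the numerical bound `≈ 0.199 ≤ 1/5`.
-/

open Real

namespace Real

lemma log_div_one_add_antitoneOn : AntitoneOn (fun u : ℝ => log u / (1 + u)) (Set.Ici 4) := by
  intro u (hu : (4 : ℝ) ≤ u) v _ huv
  have hu0 : 0 < u := by linarith
  have hv0 : 0 < v := by linarith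
  -- `1 + 1/u ≤ 5/4 < log 4 ≤ log u` is what makes the function decrease.
  have hlog_u : 1 + u⁻¹ ≤ log u := by
    have h4 : log 4 ≤ log u := log_le_log (by norm_num) hu
    have hlog4 : log 4 = 2 * log 2 := by
      rw [show (4 : ℝ) = 2 ^ 2 by norm_num, log_pow]; push_cast; ring
    have : u⁻¹ ≤ 1 / 4 := by rw [inv_le_comm₀ hu0 (by norm_num)]; linarith
    linarith [log_two_gt_d9]
  have hlog_vu : log v ≤ log u + (v - u) * u⁻¹ := by
    have := log_le_sub_one_of_pos (div_pos hv0 hu0)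
    rw [log_div hv0.ne' hu0.ne'] at this
    have : v / u - 1 = (v - u) * u⁻¹ := by field_simp
    linarith
  show log v / (1 + v) ≤ log u / (1 + u)
  rw [div_le_div_iff₀ (by linarith) (by linarith)]
  have hvu : 0 ≤ v - u := by linarith
  have : (v - u) * u⁻¹ * (1 + u) = (v - u) * (1 + u⁻¹) := by field_simp; ring
  nlinarith [mul_le_mul_of_nonneg_left hlog_u hvu]

lemma antitoneOn_one_sub_mul_log_div_one_sub :
    AntitoneOn (fun s : ℝ => (1 - s) * log (s / (1 - s))) (Set.Ico (4 / 5) 1) := by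
  have hrepr : ∀ s ∈ Set.Ico (4 / 5 : ℝ) 1,
      (1 - s) * log (s / (1 - s)) = log (s / (1 - s)) / (1 + s / (1 - s)) := by
    rintro s ⟨-, hs1⟩
    have : 1 + s / (1 - s) = (1 - s)⁻¹ := by field_simp; ring
    rw [this, div_inv_eq_mul, mul_comm]
  have hmono : MonotoneOn (fun s : ℝ => s / (1 - s)) (Set.Ico (4 / 5) 1) := by
    rintro s ⟨hs0, hs1⟩ t ⟨-, ht1⟩ hst
    exact div_le_div₀ (by linarith) hst (by linarith) (by linarith)
  have hmaps : Set.MapsTo (fun s : ℝ => s / (1 - s)) (Set.Ico (4 / 5) 1) (Set.Ici 4) := by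
    rintro s ⟨hs0, hs1⟩
    show 4 ≤ s / (1 - s)
    rw [le_div_iff₀ (by linarith)]; linarith
  intro s hs t ht hst
  simp only [hrepr s hs, hrepr t ht]
  exact log_div_one_add_antitoneOn (hmaps hs) (hmaps ht) (hmono hs ht hst)

lemma one_sub_mul_log_div_one_sub_le {q s : ℝ} (hq0 : 0 < q) (hq : q ≤ 1 / 4)
    (hs : 1 / (1 + q) ≤ s) (hs1 : s < 1) :
    (1 - s) * log (s / (1 - s)) ≤ q / (1 + q) * log q⁻¹ := by
  have hs₀ : 4 / 5 ≤ 1 / (1 + q) := by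
    rw [le_div_iff₀ (by linarith)]; linarith
  have h := antitoneOn_one_sub_mul_log_div_one_sub ⟨hs₀, by
    rw [div_lt_one (by linarith)]; linarith⟩ ⟨hs₀.trans hs, hs1⟩ hs
  have h1 : 1 - 1 / (1 + q) = q / (1 + q) := by field_simp; ring
  have h2 : 1 / (1 + q) / (q / (1 + q)) = q⁻¹ := by field_simp
  simpa only [h1, h2] using h

lemma zpow_neg_ceil_le {a : ℝ} (ha0 : 0 < a) (ha1 : a ≤ 1) (y : ℝ) :
    a ^ (-⌈y⌉) ≤ a⁻¹ * a⁻¹ ^ y := by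
  have h1 : 1 ≤ a⁻¹ := one_le_inv₀ ha0 |>.mpr ha1
  rw [zpow_neg, ← inv_zpow, ← rpow_intCast, mul_comm, ← rpow_add_one (by positivity)]
  exact rpow_le_rpow_of_exponent_le h1 (Int.ceil_lt_add_one y).le

lemma rpow_logb_comm (b : ℝ) {a x : ℝ} (ha : 0 < a) (hx : 0 < x) :
    a ^ logb b x = x ^ logb b a := by
  rw [rpow_def_of_pos ha, rpow_def_of_pos hx, logb, logb]
  ring_nf

lemma rpow_mul_le_rpow_mul {c x y : ℝ} (hc : c ≤ 1) (hx : 0 < x) (hxy : x ≤ y) :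
    y ^ c * x ≤ x ^ c * y := by
  have hy : 0 < y := hx.trans_le hxy
  have h := rpow_le_rpow_of_nonpos hx hxy (sub_nonpos.mpr hc)
  rw [rpow_sub_one hy.ne', rpow_sub_one hx.ne', div_le_div_iff₀ hy hx] at h
  exact h

lemma antitoneOn_rpow_mul_pow {c r : ℝ} {N : ℕ} (hc : c ≤ 1) (hr0 : 0 ≤ r) (hr1 : r ≤ 1)
    (hN : r * (N + 2) ≤ N) :
    AntitoneOn (fun n : ℕ => ((n : ℝ) + 1) ^ c * (n * r ^ n)) {n | N ≤ n} := by
  refine antitoneOn_nat_Ici_of_succ_le fun n hn => ?_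
  have hn' : (N : ℝ) ≤ n := by exact_mod_cast hn
  have hstep : r * (n + 2) ≤ n := by
    nlinarith [mul_le_mul_of_nonneg_right hr1 (sub_nonneg.mpr hn')]
  have hpow := rpow_mul_le_rpow_mul hc (by positivity : (0 : ℝ) < n + 1)
    (by linarith : (n : ℝ) + 1 ≤ n + 2)
  push_cast
  calc ((n : ℝ) + 1 + 1) ^ c * ((n + 1) * r ^ (n + 1))
      = (((n : ℝ) + 2) ^ c * (n + 1)) * r ^ (n + 1) := by ring_nf
    _ ≤ (((n : ℝ) + 1) ^ c * (n + 2)) * r ^ (n + 1) := by gcongr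
    _ = ((n : ℝ) + 1) ^ c * (r * (n + 2) * r ^ n) := by ring
    _ ≤ ((n : ℝ) + 1) ^ c * (n * r ^ n) := by gcongr

lemma add_one_rpow_logb_le {b x : ℝ} (hb : 1 < b) (hx : 1 ≤ x) (hxb : x ≤ b) :
    (b + 1) ^ logb b x ≤ x * (1 + logb b x / b) := by
  have hb0 : 0 < b := by linarith
  have hc0 : 0 ≤ logb b x := logb_nonneg hb hx
  have hc1 : logb b x ≤ 1 := by
    rw [logb_le_iff_le_rpow hb (by linarith), rpow_one]; exact hxb
  have hsplit : b + 1 = b * (1 + b⁻¹) := by field_simp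
  rw [hsplit, mul_rpow hb0.le (by positivity), rpow_logb hb0 hb.ne' (by linarith), div_eq_mul_inv]
  gcongr
  exact rpow_one_add_le_one_add_mul_self (by linarith [inv_pos.mpr hb0]) hc0 hc1

end Real

lemma logb_45_inv_le : logb 45 (0.9616 : ℝ)⁻¹ ≤ 1 / 10 := by
  have hnum : log (0.9616 : ℝ)⁻¹ ≤ 0.9616⁻¹ - 1 := log_le_sub_one_of_pos (by norm_num)
  have hden : 1 - 45⁻¹ ≤ log (45 : ℝ) := one_sub_inv_le_log_of_pos (by norm_num)
  rw [logb, div_le_iff₀ (by linarith)]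
  linarith

lemma inv_mul_rpow_mul_pow_mul_log_le {w : ℕ} (hw : 45 ≤ w) :
    0.9616⁻¹ * (((w : ℝ) + 1) ^ logb 45 (0.9616 : ℝ)⁻¹ * (w * (16 / 17) ^ w)) * log (17 / 16)
      ≤ 1 / 5 := by
  set c : ℝ := logb 45 (0.9616 : ℝ)⁻¹
  have hc : c ≤ 1 / 10 := logb_45_inv_le
  have hL : log (17 / 16 : ℝ) ≤ 1 / 16 := by
    linarith [log_le_sub_one_of_pos (show (0 : ℝ) < 17 / 16 by norm_num)]
  have hmono : ((w : ℝ) + 1) ^ c * (w * (16 / 17) ^ w) ≤ (45 + 1) ^ c * (45 * (16 / 17) ^ 45) :=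
    antitoneOn_rpow_mul_pow (N := 45) (by linarith) (by norm_num) (by norm_num) (by norm_num)
      (le_refl 45) hw hw
  -- `45 ^ c = 0.9616⁻¹` exactly, and Bernoulli's inequality pays for the step from 45 to 46.
  have h46 : ((45 : ℝ) + 1) ^ c ≤ 0.9616⁻¹ * (1 + 1 / 450) := by
    refine (add_one_rpow_logb_le (by norm_num) (by norm_num) (by norm_num)).trans
      (mul_le_mul_of_nonneg_left ?_ (by norm_num))
    show 1 + c / 45 ≤ 1 + 1 / 450
    linarith
  calc 0.9616⁻¹ * (((w : ℝ) + 1) ^ c * (w * (16 / 17) ^ w)) * log (17 / 16)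
      ≤ 0.9616⁻¹ * ((45 + 1) ^ c * (45 * (16 / 17) ^ 45)) * (1 / 16) := by
        gcongr
    _ ≤ 0.9616⁻¹ * ((0.9616⁻¹ * (1 + 1 / 450)) * (45 * 0.06535)) * (1 / 16) := by
        gcongr; norm_num
    _ ≤ 1 / 5 := by norm_num

/-- for `α = 0.9616`, integers `w ≥ 45` and
`1/(1 + (16/17)^w) ≤ s < 1`, we have
`α^{−⌈log₄₅(w+1)⌉}·(1 − s)·ln(s/(1 − s)) ≤ 1/5`. -/
theorem decay_contribution_bound (w : ℕ) (hw : 45 ≤ w) (s : ℝ)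
    (hs1 : 1 / (1 + (16 / 17 : ℝ) ^ w) ≤ s) (hs2 : s < 1) :
    (0.9616 : ℝ) ^ (-⌈Real.logb 45 ((w : ℝ) + 1)⌉) * ((1 - s) * Real.log (s / (1 - s)))
      ≤ 1 / 5 := by
  set q : ℝ := (16 / 17) ^ w with hq_def
  have hq0 : 0 < q := by positivity
  have hq : q ≤ 1 / 4 := (pow_le_pow_of_le_one (by norm_num) (by norm_num) hw).trans (by norm_num)
  have hA : (0.9616 : ℝ) ^ (-⌈logb 45 ((w : ℝ) + 1)⌉)
      ≤ 0.9616⁻¹ * ((w : ℝ) + 1) ^ logb 45 (0.9616 : ℝ)⁻¹ := by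
    rw [← rpow_logb_comm 45 (by norm_num) (by positivity)]
    exact zpow_neg_ceil_le (by norm_num) (by norm_num) _
  have hB : (1 - s) * log (s / (1 - s)) ≤ q * (w * log (17 / 16)) := by
    have hlog_q : log q⁻¹ = w * log (17 / 16) := by
      rw [hq_def, ← inv_pow, log_pow]; norm_num
    refine (one_sub_mul_log_div_one_sub_le hq0 hq hs1 hs2).trans ?_
    rw [hlog_q]
    gcongr
    exact div_le_self hq0.le (by linarith)
  calc (0.9616 : ℝ) ^ (-⌈logb 45 ((w : ℝ) + 1)⌉) * ((1 - s) * log (s / (1 - s)))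
      ≤ 0.9616⁻¹ * ((w : ℝ) + 1) ^ logb 45 (0.9616 : ℝ)⁻¹ * (q * (w * log (17 / 16))) :=
        (mul_le_mul_of_nonneg_left hB (by positivity)).trans
          (mul_le_mul_of_nonneg_right hA (by positivity))
    _ = 0.9616⁻¹ * (((w : ℝ) + 1) ^ logb 45 (0.9616 : ℝ)⁻¹ * (w * q)) * log (17 / 16) := by
        ring
    _ ≤ 1 / 5 := inv_mul_rpow_mul_pow_mul_log_le hw
end

section
/- Let α = 0.9616 and define κ̂(ŝ) = 3(1 − ŝ)ŝ^3·ln(ŝ/(1 − ŝ)) / (α(ŝ^3 + 2)·ln((ŝ^3 + 2)/2)) + 1/5 for ŝ ∈ [1/2, 1). Then κ̂(ŝ) < 1 for all ŝ ∈ [1/2, 1). -/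
/-!
Both logarithms are of the form `log ((1 + x) / (1 - x)) = 2 ∑ x ^ (2k+1) / (2k+1)`, with
`x = 2s - 1` for `log (s / (1 - s))` and `x = s³ / (s³ + 4)` for `log ((s³ + 2) / 2)`. Keeping the
first term of the series bounds the denominator from below by `2x`; keeping two terms and bounding
the rest by a geometric series bounds the numerator from above. After these substitutions the first
summand is below `4/5` as soon as a degree-8 polynomial is positive on `[1/2, 1]`.
-/

open Real

theorem two_mul_le_log_one_add_div_one_sub {x : ℝ} (hx₀ : 0 ≤ x) (hx₁ : x < 1) :
    2 * x ≤ log ((1 + x) / (1 - x)) := by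
  have h := hasSum_log_sub_log_of_abs_lt_one (abs_lt.2 ⟨by linarith, hx₁⟩)
  rw [← log_div (by linarith) (by linarith)] at h
  simpa using le_hasSum h 0 fun k _ => by positivity

noncomputable def logRatioUpper (x : ℝ) : ℝ :=
  2 * x + 2 * x ^ 3 / 3 + 2 * x ^ 5 / (5 * (1 - x ^ 2))

theorem log_one_add_div_one_sub_le {x : ℝ} (hx₀ : 0 ≤ x) (hx₁ : x < 1) :
    log ((1 + x) / (1 - x)) ≤ logRatioUpper x := by
  have hsq : x ^ 2 < 1 := by nlinarith
  have h := hasSum_log_sub_log_of_abs_lt_one (abs_lt.2 ⟨by linarith, hx₁⟩)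
  rw [← log_div (by linarith) (by linarith)] at h
  have htail := (hasSum_nat_add_iff' 2).2 h
  have hgeom := (hasSum_geometric_of_lt_one (sq_nonneg x) hsq).mul_left (2 / 5 * x ^ 5)
  have hle := hasSum_le (fun k => ?_) htail hgeom
  · norm_num [Finset.sum_range_succ] at hle
    have : 1 - x ^ 2 ≠ 0 := by linarith
    refine hle.trans_eq ?_
    unfold logRatioUpper
    field_simp
    ring
  · have hk : (1 : ℝ) / (2 * ↑(k + 2) + 1) ≤ 1 / 5 := by
      gcongr; push_cast; linarith [k.cast_nonneg (α := ℝ)]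
    calc 2 * (1 / (2 * ↑(k + 2) + 1)) * x ^ (2 * (k + 2) + 1)
        ≤ 2 * (1 / 5) * x ^ (2 * (k + 2) + 1) := by gcongr
      _ = 2 / 5 * x ^ 5 * (x ^ 2) ^ k := by ring

-- The Bernstein coefficients on `[1/2, 3/4]` and on `[3/4, 1]` are all positive.
theorem kappa_poly_pos {s : ℝ} (h₀ : 1 / 2 ≤ s) (h₁ : s ≤ 1) :
    0 < 8 / 5 * (0.9616 : ℝ) * s * (s ^ 3 + 2) -
      (s ^ 3 + 4) * (3 * s * (1 - s) * (2 * (2 * s - 1) + 2 * (2 * s - 1) ^ 3 / 3) +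
        3 * (2 * s - 1) ^ 5 / 10) := by
  rcases le_total s (3 / 4) with h | h
  · have ha : 0 ≤ s - 1 / 2 := by linarith
    have hb : 0 ≤ 3 / 4 - s := by linarith
    nlinarith [pow_nonneg hb 8, mul_nonneg ha (pow_nonneg hb 7),
      mul_nonneg (pow_nonneg ha 2) (pow_nonneg hb 6), mul_nonneg (pow_nonneg ha 3) (pow_nonneg hb 5),
      mul_nonneg (pow_nonneg ha 4) (pow_nonneg hb 4), mul_nonneg (pow_nonneg ha 5) (pow_nonneg hb 3),
      mul_nonneg (pow_nonneg ha 6) (pow_nonneg hb 2), mul_nonneg (pow_nonneg ha 7) hb, pow_nonneg ha 8]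
  · have ha : 0 ≤ s - 3 / 4 := by linarith
    have hb : 0 ≤ 1 - s := by linarith
    nlinarith [pow_nonneg hb 8, mul_nonneg ha (pow_nonneg hb 7),
      mul_nonneg (pow_nonneg ha 2) (pow_nonneg hb 6), mul_nonneg (pow_nonneg ha 3) (pow_nonneg hb 5),
      mul_nonneg (pow_nonneg ha 4) (pow_nonneg hb 4), mul_nonneg (pow_nonneg ha 5) (pow_nonneg hb 3),
      mul_nonneg (pow_nonneg ha 6) (pow_nonneg hb 2), mul_nonneg (pow_nonneg ha 7) hb, pow_nonneg ha 8]

theorem kappa_rational_bound_lt {s : ℝ} (h₀ : 1 / 2 ≤ s) (h₁ : s < 1) :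
    3 * (1 - s) * s ^ 3 * logRatioUpper (2 * s - 1) <
      4 / 5 * ((0.9616 : ℝ) * (s ^ 3 + 2) * (2 * (s ^ 3 / (s ^ 3 + 4)))) := by
  have hs : 0 < s := by linarith
  have h1s : 0 < 1 - s := by linarith
  have hP := kappa_poly_pos h₀ h₁.le
  rw [← sub_pos]
  refine (div_pos (mul_pos (pow_pos hs 2) hP) (by positivity : (0 : ℝ) < s ^ 3 + 4)).trans_eq ?_
  unfold logRatioUpper
  rw [show 1 - (2 * s - 1) ^ 2 = 4 * s * (1 - s) by ring]
  field_simp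
  ring

/-- amortized decay rate bound, case `d = 4`, `d₂ = 1`. -/
theorem kappa_d2_one_lt_one :
    ∀ s : ℝ, 1 / 2 ≤ s → s < 1 →
      3 * (1 - s) * s ^ 3 * Real.log (s / (1 - s)) /
        ((0.9616 : ℝ) * (s ^ 3 + 2) * Real.log ((s ^ 3 + 2) / 2)) + 1 / 5 < 1 := by
  intro s h₀ h₁
  have hs : 0 < s := by linarith
  have h1s : 0 < 1 - s := by linarith
  have hupper : log (s / (1 - s)) ≤ logRatioUpper (2 * s - 1) := by
    convert log_one_add_div_one_sub_le (x := 2 * s - 1) (by linarith) (by linarith) using 2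
    rw [show 1 + (2 * s - 1) = 2 * s by ring, show 1 - (2 * s - 1) = 2 * (1 - s) by ring,
      mul_div_mul_left _ _ two_ne_zero]
  have hlower : 2 * (s ^ 3 / (s ^ 3 + 4)) ≤ log ((s ^ 3 + 2) / 2) := by
    convert two_mul_le_log_one_add_div_one_sub (x := s ^ 3 / (s ^ 3 + 4)) (by positivity)
      ((div_lt_one (by positivity)).2 (by linarith)) using 2
    field_simp
    ring
  have hlower_pos : 0 < 2 * (s ^ 3 / (s ^ 3 + 4)) := by positivity
  have hfirst : 3 * (1 - s) * s ^ 3 * log (s / (1 - s)) /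
      ((0.9616 : ℝ) * (s ^ 3 + 2) * log ((s ^ 3 + 2) / 2)) < 4 / 5 := by
    rw [div_lt_iff₀ (by have := hlower_pos.trans_le hlower; positivity)]
    calc 3 * (1 - s) * s ^ 3 * log (s / (1 - s))
        ≤ 3 * (1 - s) * s ^ 3 * logRatioUpper (2 * s - 1) := by gcongr
      _ < 4 / 5 * ((0.9616 : ℝ) * (s ^ 3 + 2) * (2 * (s ^ 3 / (s ^ 3 + 4)))) :=
        kappa_rational_bound_lt h₀ h₁
      _ ≤ 4 / 5 * ((0.9616 : ℝ) * (s ^ 3 + 2) * log ((s ^ 3 + 2) / 2)) := by gcongr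
  linarith
end

section
/- Let α = 0.9616 and define κ̂(ŝ) = 2(1 − ŝ)ŝ^2·ln(ŝ/(1 − ŝ)) / (α(ŝ^2 + 4)·ln((ŝ^2 + 4)/4)) + 2/5 for ŝ ∈ [1/2, 1). Then κ̂(ŝ) < 1 for all ŝ ∈ [1/2, 1). -/
open Real

/-- amortized decay rate bound, case `d = 4`, `d₂ = 2`. -/
theorem kappa_d2_two_lt_one :
    ∀ s : ℝ, 1 / 2 ≤ s → s < 1 →
      2 * (1 - s) * s ^ 2 * Real.log (s / (1 - s)) /
        ((0.9616 : ℝ) * (s ^ 2 + 4) * Real.log ((s ^ 2 + 4) / 4)) + 2 / 5 < 1 := by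
  intro s hs1 hs2
  have hs0 : (0:ℝ) < s := lt_of_lt_of_le (by norm_num) hs1
  have ht0 : (0:ℝ) < 1 - s := by linarith
  have hs2pos : (0:ℝ) < s ^ 2 := by positivity
  have hq : (1:ℝ) < (s ^ 2 + 4) / 4 := by nlinarith
  have hlogq : 0 < Real.log ((s ^ 2 + 4) / 4) := Real.log_pos hq
  have hD : 0 < (0.9616 : ℝ) * (s ^ 2 + 4) * Real.log ((s ^ 2 + 4) / 4) := by positivity
  -- log 4 bound
  have hlog2 : Real.log 2 < 0.6931472 := lt_trans Real.log_two_lt_d9 (by norm_num)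
  have hlog4 : Real.log 4 < 1.3862944 := by
    have : (4:ℝ) = 2 * 2 := by norm_num
    rw [this, Real.log_mul (by norm_num) (by norm_num)]
    linarith
  -- upper bound for log s
  have h1 : Real.log s ≤ s - 1 := Real.log_le_sub_one_of_pos hs0
  -- lower bound for log (1-s): -log(1-s) ≤ 1/(4(1-s)) + log 4 - 1
  have h2 : -Real.log (1 - s) ≤ 1 / (4 * (1 - s)) + Real.log 4 - 1 := by
    have hx : (0:ℝ) < 1 / (4 * (1 - s)) := by positivity
    have := Real.log_le_sub_one_of_pos hx
    rw [Real.log_div one_ne_zero (by positivity), Real.log_mul (by norm_num) (ne_of_gt ht0), Real.log_one] at this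
    linarith
  -- lower bound for denominator log: (s²+4) * log ≥ s²
  have h3 : s ^ 2 ≤ (s ^ 2 + 4) * Real.log ((s ^ 2 + 4) / 4) := by
    have hx : (0:ℝ) < 4 / (s ^ 2 + 4) := by positivity
    have h := Real.log_le_sub_one_of_pos hx
    have he : Real.log (4 / (s ^ 2 + 4)) = -Real.log ((s ^ 2 + 4) / 4) := by
      rw [Real.log_div (by norm_num) (by positivity), Real.log_div (by positivity) (by norm_num)]
      ring
    rw [he] at h
    have h4 : 4 / (s ^ 2 + 4) - 1 + Real.log ((s ^ 2 + 4) / 4) ≥ 0 := by linarith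
    have hpos : (0:ℝ) < s ^ 2 + 4 := by positivity
    have := mul_nonneg (le_of_lt hpos) h4
    have hcancel : (s ^ 2 + 4) * (4 / (s ^ 2 + 4)) = 4 := by
      field_simp
    nlinarith [this]
  -- split log of quotient
  have hsplit : Real.log (s / (1 - s)) = Real.log s - Real.log (1 - s) :=
    Real.log_div (ne_of_gt hs0) (ne_of_gt ht0)
  -- numerator bound: N ≤ s² * (-2(1-s)² + 2(1-s)(log 4 - 1) + 1/2) < 0.57696 s²
  have hNle : 2 * (1 - s) * s ^ 2 * Real.log (s / (1 - s)) < 0.57696 * s ^ 2 := by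
    rw [hsplit]
    have hfrac : 2 * (1 - s) * (1 / (4 * (1 - s))) = 1 / 2 := by
      field_simp
      ring
    have hbound : Real.log s - Real.log (1 - s) ≤
        -(1 - s) + 1 / (4 * (1 - s)) + Real.log 4 - 1 := by linarith
    have hmul : 2 * (1 - s) * s ^ 2 * (Real.log s - Real.log (1 - s)) ≤
        2 * (1 - s) * s ^ 2 * (-(1 - s) + 1 / (4 * (1 - s)) + Real.log 4 - 1) := by
      apply mul_le_mul_of_nonneg_left hbound
      positivity
    have hrhs : 2 * (1 - s) * s ^ 2 * (-(1 - s) + 1 / (4 * (1 - s)) + Real.log 4 - 1)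
        < 0.57696 * s ^ 2 := by
      have hexp : 2 * (1 - s) * s ^ 2 * (-(1 - s) + 1 / (4 * (1 - s)) + Real.log 4 - 1)
          = s ^ 2 * (-2 * (1 - s) ^ 2 + 2 * (1 - s) * (Real.log 4 - 1) + 1 / 2) := by
        field_simp
        ring
      rw [hexp]
      have hquad : -2 * (1 - s) ^ 2 + 2 * (1 - s) * (Real.log 4 - 1) + 1 / 2 < 0.57696 := by
        nlinarith [sq_nonneg (4 * (1 - s) - 0.7725888), mul_pos ht0 ht0]
      nlinarith [hquad, hs2pos]
    linarith
  -- denominator bound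
  have hDge : 0.57696 * s ^ 2 ≤ 3 / 5 * ((0.9616 : ℝ) * (s ^ 2 + 4) * Real.log ((s ^ 2 + 4) / 4)) := by
    nlinarith [h3]
  have hdiv : 2 * (1 - s) * s ^ 2 * Real.log (s / (1 - s)) /
      ((0.9616 : ℝ) * (s ^ 2 + 4) * Real.log ((s ^ 2 + 4) / 4)) < 3 / 5 := by
    rw [div_lt_iff₀ hD]
    calc 2 * (1 - s) * s ^ 2 * Real.log (s / (1 - s)) < 0.57696 * s ^ 2 := hNle
    _ ≤ 3 / 5 * ((0.9616 : ℝ) * (s ^ 2 + 4) * Real.log ((s ^ 2 + 4) / 4)) := hDge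
  linarith
end

section
/- Let α = 0.9616 and define κ̂(ŝ) = (1 − ŝ)ŝ·ln(ŝ/(1 − ŝ)) / (α(ŝ + 8)·ln((ŝ + 8)/8)) + 3/5 for ŝ ∈ [1/2, 1). Then κ̂(ŝ) < 1 for all ŝ ∈ [1/2, 1). -/
/-!
The numerator is at most `s / e`: the factor `(1 - s) s log s` is nonpositive, and
`(1 - s) · (-log (1 - s)) ≤ 1 / e` because `x · (-log x)` peaks at `x = 1 / e`.
The denominator is at least `α s`, since `log ((s + 8) / 8) ≥ 1 - 8 / (s + 8) = s / (s + 8)`.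
Hence the first summand is below `1 / (e α) < 2 / 5`.
-/

open Real

lemma mul_neg_log_le_exp_neg_one {x : ℝ} (hx : 0 ≤ x) : x * -log x ≤ exp (-1) := by
  rcases hx.eq_or_lt with rfl | hx
  · simpa using (exp_pos (-1)).le
  simpa [exp_log hx, mul_comm] using mul_exp_neg_le_exp_neg_one (-log x)

lemma mul_mul_log_div_one_sub_le {s : ℝ} (hs₀ : 0 < s) (hs₁ : s < 1) :
    (1 - s) * s * log (s / (1 - s)) ≤ s * exp (-1) := by
  have hlog_s : log s ≤ 0 := log_nonpos hs₀.le hs₁.le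
  have hpeak := mul_neg_log_le_exp_neg_one (sub_pos.2 hs₁).le
  rw [log_div hs₀.ne' (sub_pos.2 hs₁).ne']
  nlinarith [mul_nonneg (sub_pos.2 hs₁).le hs₀.le]

lemma div_add_le_log_add_div {x c : ℝ} (hc : 0 < c) (hxc : 0 < x + c) :
    x / (x + c) ≤ log ((x + c) / c) := by
  have h := one_sub_inv_le_log_of_pos (div_pos hxc hc)
  rwa [inv_div, one_sub_div hxc.ne', add_sub_cancel_right] at h

/-- amortized decay rate bound, case `d = 4`, `d₂ = 3`. -/
theorem kappa_d2_three_lt_one :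
    ∀ s : ℝ, 1 / 2 ≤ s → s < 1 →
      (1 - s) * s * Real.log (s / (1 - s)) /
        ((0.9616 : ℝ) * (s + 8) * Real.log ((s + 8) / 8)) + 3 / 5 < 1 := by
  intro s hs₀ hs₁
  have hs : 0 < s := by linarith
  have hlog : s / (s + 8) ≤ log ((s + 8) / 8) :=
    div_add_le_log_add_div (by norm_num) (by linarith)
  have hden : 0.9616 * s ≤ 0.9616 * (s + 8) * log ((s + 8) / 8) :=
    calc 0.9616 * s = 0.9616 * (s + 8) * (s / (s + 8)) := by field_simp
      _ ≤ _ := by gcongr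
  have hden_pos : 0 < 0.9616 * (s + 8) * log ((s + 8) / 8) := by linarith
  have hnum : (1 - s) * s * log (s / (1 - s)) < 2 / 5 * (0.9616 * (s + 8) * log ((s + 8) / 8)) :=
    calc (1 - s) * s * log (s / (1 - s)) ≤ s * exp (-1) := mul_mul_log_div_one_sub_le hs hs₁
      _ < s * (2 / 5 * 0.9616) := by
        gcongr
        exact exp_neg_one_lt_d9.trans (by norm_num)
      _ ≤ _ := by linarith
  linarith [(div_lt_iff₀ hden_pos).2 hnum]
end

section
/- The function f(ŝ) = (1 − ŝ)·ln(ŝ/(1 − ŝ)) satisfies f(ŝ) < 0.3 for all ŝ ∈ [1/2, 1); consequently, for α = 0.9616, 5·f(ŝ)/α + 1 < 3 for all ŝ ∈ [1/2, 1). -/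
/-!
Write `u = 1 - s`, so `f(s) = u log s - u log u`. The first term is at most `-u` since
`log s ≤ s - 1`; the concave function `-u log u` lies below its tangent line at `u = 1/4`.
Hence `f(s) ≤ 1/4 + (log 4 - 1) u - u²`, whose maximum `1/4 + (log 4 - 1)²/4 ≈ 0.287`
is below `0.3`.
-/

open Real

namespace Real

lemma neg_mul_log_le_tangent {a x : ℝ} (ha : 0 < a) (hx : 0 < x) :
    -(x * log x) ≤ a - x - x * log a := by
  have h := mul_le_mul_of_nonneg_left (log_le_sub_one_of_pos (div_pos ha hx)) hx.le
  rw [log_div ha.ne' hx.ne', mul_sub_one, mul_div_cancel₀ a hx.ne'] at h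
  linarith

lemma log_four_lt : log 4 < 1.3863 := by
  have h : log 4 = 2 * log 2 := by
    rw [show (4 : ℝ) = 2 ^ 2 by norm_num, log_pow, Nat.cast_ofNat]
  linarith [log_two_lt_d9]

lemma one_sub_mul_log_div_one_sub_le_s19 {s : ℝ} (hs₀ : 0 < s) (hs₁ : s < 1) :
    (1 - s) * log (s / (1 - s)) ≤ 1 / 4 + (log 4 - 1) ^ 2 / 4 := by
  set u := 1 - s with hu
  have hu₀ : 0 < u := by linarith
  have h_log_s : u * log s ≤ u * (-u) :=
    mul_le_mul_of_nonneg_left (by linarith [log_le_sub_one_of_pos hs₀]) hu₀.le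
  have h_tangent := neg_mul_log_le_tangent (by norm_num : (0 : ℝ) < 1 / 4) hu₀
  rw [one_div, log_inv] at h_tangent
  rw [log_div hs₀.ne' hu₀.ne']
  nlinarith [sq_nonneg (u - (log 4 - 1) / 2)]

lemma one_sub_mul_log_div_one_sub_lt {s : ℝ} (hs₀ : 0 < s) (hs₁ : s < 1) :
    (1 - s) * log (s / (1 - s)) < 0.3 := by
  have h_log_four_gt : 1 < log 4 := by
    rw [lt_log_iff_exp_lt (by norm_num)]
    linarith [exp_one_lt_d9]
  nlinarith [one_sub_mul_log_div_one_sub_le_s19 hs₀ hs₁, log_four_lt]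

end Real

/-- `f(ŝ) = (1 − ŝ)·ln(ŝ/(1 − ŝ)) < 0.3` on `[1/2, 1)`, hence
`5·f(ŝ)/α + 1 < 3` for `α = 0.9616`. -/
theorem f_lt_and_kappa5_lt_three :
    (∀ s : ℝ, 1 / 2 ≤ s → s < 1 → (1 - s) * Real.log (s / (1 - s)) < 0.3) ∧
      (∀ s : ℝ, 1 / 2 ≤ s → s < 1 →
        5 * ((1 - s) * Real.log (s / (1 - s))) / (0.9616 : ℝ) + 1 < 3) := by
  have hf (s : ℝ) (hs : 1 / 2 ≤ s) (hs₁ : s < 1) :=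
    one_sub_mul_log_div_one_sub_lt (by linarith) hs₁
  refine ⟨hf, fun s hs hs₁ => ?_⟩
  have := hf s hs hs₁
  rw [← lt_sub_iff_add_lt, div_lt_iff₀ (by norm_num)]
  linarith
end
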